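/- Let $E,F$ be Banach spaces (over the real or complex field), $1<p<\infty$, $1/p+1/p^*=1$, let $A:E^n\to F$ be a symmetric bounded $n$-linear operator and let $P:E\to F$ be the associated $n$-homogeneous polynomial $P(x)=A(x,\dots,x)$. The following are equivalent: (i) for every sequence $(x_i)_{i=1}^\infty$ in $E$ with $\sum_{i=1}^\infty\|x_i\|^{np}<\infty$, the sequence $(P(x_i))_{i=1}^\infty$ is Cohen strongly $p$-summing in $F$; (ii) there exists $C>0$ such that $\sum_{i=1}^m|\varphi_i(P(x_i))|\le C\,(\sum_{i=1}^m\|x_i\|^{np})^{1/p}\,\|(\varphi_i)_{i=1}^m\|_{w,p^*}$ for all $m\in\mathbb{N}$, all $x_1,\dots,x_m\in E$ and all $\varphi_1,\dots,\varphi_m\in F'$. -/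

import Mathlib

/-!
(ii) ⇒ (i) is immediate: apply the inequality to finite sections of the sequences.

(i) ⇒ (ii) is a gliding-hump argument. If for no `δ > 0` were the sums `∑ ‖φ i (P (x i))‖`
bounded by `1` on the finite families with `∑ ‖x i‖ ^ (n p) ≤ δ` and weak `q`-sums of `φ` at
most `δ`, then violating families for `δ = 2⁻ᵏ` could be concatenated into sequences to which (i)
applies, although every block contributes more than `1`. Since `P` is `n`-homogeneous, rescaling
`x ↦ t • x`, `φ ↦ s • φ` turns this local bound into (ii) with `C = δ⁻¹`.
-/

open scoped BigOperators

/-- The weak `q`-norm of a finite family of continuous linear functionals on `F`. -/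
noncomputable def weakNorm {𝕜 F : Type*} [RCLike 𝕜] [NormedAddCommGroup F] [NormedSpace 𝕜 F]
    {ι : Type*} [Fintype ι] (q : ℝ) (φ : ι → F →L[𝕜] 𝕜) : ℝ :=
  ⨆ y : Metric.closedBall (0 : F) 1, (∑ i, ‖φ i (y : F)‖ ^ q) ^ (1 / q)

open Metric

section WeakNorm

variable {𝕜 F ι : Type*} [RCLike 𝕜] [NormedAddCommGroup F] [NormedSpace 𝕜 F] [Fintype ι]
  {q : ℝ}

lemma weakNorm_nonneg (φ : ι → F →L[𝕜] 𝕜) : 0 ≤ weakNorm q φ :=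
  Real.iSup_nonneg fun _ => by positivity

lemma le_weakNorm (hq : 0 < q) (φ : ι → F →L[𝕜] 𝕜) {y : F} (hy : y ∈ closedBall (0 : F) 1) :
    (∑ i, ‖φ i y‖ ^ q) ^ (1 / q) ≤ weakNorm q φ := by
  refine le_ciSup (f := fun y : closedBall (0 : F) 1 => (∑ i, ‖φ i (y : F)‖ ^ q) ^ (1 / q))
    ⟨(∑ i, ‖φ i‖ ^ q) ^ (1 / q), ?_⟩ ⟨y, hy⟩
  rintro _ ⟨⟨z, hz⟩, rfl⟩
  have hz : ‖z‖ ≤ 1 := by simpa using hz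
  refine Real.rpow_le_rpow (by positivity) (Finset.sum_le_sum fun i _ => ?_) (by positivity)
  refine Real.rpow_le_rpow (norm_nonneg _) ?_ hq.le
  simpa using (φ i).le_of_opNorm_le_of_le le_rfl hz

lemma weakNorm_le (φ : ι → F →L[𝕜] 𝕜) {a : ℝ} (ha : 0 ≤ a)
    (h : ∀ y ∈ closedBall (0 : F) 1, (∑ i, ‖φ i y‖ ^ q) ^ (1 / q) ≤ a) : weakNorm q φ ≤ a :=
  Real.iSup_le (fun y => h y y.2) ha

lemma sum_rpow_le_weakNorm_rpow (hq : 0 < q) (φ : ι → F →L[𝕜] 𝕜) {y : F}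
    (hy : y ∈ closedBall (0 : F) 1) : ∑ i, ‖φ i y‖ ^ q ≤ weakNorm q φ ^ q := by
  have h := Real.rpow_le_rpow (by positivity) (le_weakNorm hq φ hy) hq.le
  rwa [← Real.rpow_mul (by positivity), one_div_mul_cancel hq.ne', Real.rpow_one] at h

lemma norm_le_weakNorm (hq : 0 < q) (φ : ι → F →L[𝕜] 𝕜) (i : ι) : ‖φ i‖ ≤ weakNorm q φ := by
  refine ContinuousLinearMap.opNorm_le_of_unit_norm (weakNorm_nonneg φ) fun y hy => ?_
  calc ‖φ i y‖ = (‖φ i y‖ ^ q) ^ (1 / q) := by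
        rw [← Real.rpow_mul (norm_nonneg _), mul_one_div_cancel hq.ne', Real.rpow_one]
    _ ≤ (∑ j, ‖φ j y‖ ^ q) ^ (1 / q) := by
        gcongr
        exact Finset.single_le_sum (f := fun j => ‖φ j y‖ ^ q) (fun j _ => by positivity)
          (Finset.mem_univ i)
    _ ≤ weakNorm q φ := le_weakNorm hq φ (by simp [hy])

end WeakNorm

def IsWeaklySummable {𝕜 F ι : Type*} [RCLike 𝕜] [NormedAddCommGroup F] [NormedSpace 𝕜 F]
    (q : ℝ) (φ : ι → F →L[𝕜] 𝕜) : Prop :=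
  ∃ C : ℝ, ∀ y ∈ closedBall (0 : F) 1, ∀ s : Finset ι, ∑ i ∈ s, ‖φ i y‖ ^ q ≤ C

section Sigma

variable {α : Type*} {β : α → Type*} [∀ a, Fintype (β a)] {f : (Σ a, β a) → ℝ} {ε : α → ℝ}

lemma summable_sigma_of_sum_le (hf : 0 ≤ f) (hε : Summable ε) (h : ∀ a, ∑ b, f ⟨a, b⟩ ≤ ε a) :
    Summable f := by
  refine (summable_sigma_of_nonneg hf).2 ⟨fun _ => .of_finite, ?_⟩
  refine hε.of_nonneg_of_le (fun a => tsum_nonneg fun b => hf _) fun a => ?_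
  simpa only [tsum_fintype] using h a

lemma sum_sigma_le_tsum (hf : 0 ≤ f) (hε : Summable ε) (h : ∀ a, ∑ b, f ⟨a, b⟩ ≤ ε a)
    (s : Finset (Σ a, β a)) : ∑ j ∈ s, f j ≤ ∑' a, ε a := by
  have hfs := summable_sigma_of_sum_le hf hε h
  calc ∑ j ∈ s, f j ≤ ∑' j, f j := hfs.sum_le_tsum s fun j _ => hf j
    _ = ∑' a, ∑' b, f ⟨a, b⟩ := hfs.tsum_sigma' fun _ => .of_finite
    _ ≤ ∑' a, ε a := hfs.sigma.tsum_le_tsum (fun a => by simpa only [tsum_fintype] using h a) hε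

end Sigma

section Summing

variable {𝕜 E F : Type*} [RCLike 𝕜] [NormedAddCommGroup E] [NormedAddCommGroup F]
  [NormedSpace 𝕜 F] {P : E → F} {r q : ℝ}

lemma summable_norm_apply_of_countable (hr : r ≠ 0) (hq : q ≠ 0)
    (h : ∀ x : ℕ → E, Summable (fun i => ‖x i‖ ^ r) → ∀ φ : ℕ → F →L[𝕜] 𝕜,
      IsWeaklySummable q φ → Summable (fun i => ‖φ i (P (x i))‖))
    {ι : Type*} [Countable ι] (x : ι → E) (hx : Summable fun i => ‖x i‖ ^ r)
    (φ : ι → F →L[𝕜] 𝕜) (hφ : IsWeaklySummable q φ) :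
    Summable fun i => ‖φ i (P (x i))‖ := by
  obtain ⟨e, he⟩ := exists_injective_nat ι
  set x' : ℕ → E := Function.extend e x 0
  set φ' : ℕ → F →L[𝕜] 𝕜 := Function.extend e φ 0
  have hx' : ∀ i, x' (e i) = x i := he.extend_apply x 0
  have hφ' : ∀ i, φ' (e i) = φ i := he.extend_apply φ 0
  have hout : ∀ k ∉ Set.range e, x' k = 0 ∧ φ' k = 0 := fun k hk =>
    ⟨Function.extend_apply' _ _ _ fun ⟨i, hi⟩ => hk ⟨i, hi⟩,
      Function.extend_apply' _ _ _ fun ⟨i, hi⟩ => hk ⟨i, hi⟩⟩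
  have hsum := h x' ?_ φ' ?_
  · simpa only [Function.comp_def, hx', hφ'] using hsum.comp_injective he
  · refine (he.summable_iff (f := fun k => ‖x' k‖ ^ r) fun k hk => ?_).1 ?_
    · simp [(hout k hk).1, Real.zero_rpow hr]
    · simpa only [Function.comp_def, hx'] using hx
  · obtain ⟨C, hC⟩ := hφ
    refine ⟨C, fun y hy s => ?_⟩
    rw [← Finset.sum_preimage e s he.injOn _ fun k _ hk => by
      simp [(hout k hk).2, Real.zero_rpow hq]]
    simpa only [hφ'] using hC y hy _

lemma exists_sum_norm_apply_le_one (hr : r ≠ 0) (hq : q ≠ 0)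
    (h : ∀ x : ℕ → E, Summable (fun i => ‖x i‖ ^ r) → ∀ φ : ℕ → F →L[𝕜] 𝕜,
      IsWeaklySummable q φ → Summable (fun i => ‖φ i (P (x i))‖)) :
    ∃ δ > 0, ∀ (m : ℕ) (x : Fin m → E) (φ : Fin m → F →L[𝕜] 𝕜), ∑ i, ‖x i‖ ^ r ≤ δ →
      (∀ y ∈ closedBall (0 : F) 1, ∑ i, ‖φ i y‖ ^ q ≤ δ) → ∑ i, ‖φ i (P (x i))‖ ≤ 1 := by
  by_contra! hcon
  choose m x φ hx hφ hL using fun k : ℕ => hcon ((1 / 2) ^ k) (by positivity)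
  have hsum := summable_norm_apply_of_countable hr hq h (fun j : Σ k, Fin (m k) => x j.1 j.2)
    (summable_sigma_of_sum_le (fun _ => by positivity) summable_geometric_two hx)
    (fun j => φ j.1 j.2)
    ⟨_, fun y hy => sum_sigma_le_tsum (fun _ => by positivity) summable_geometric_two
      fun k => hφ k y hy⟩
  obtain ⟨k, hk⟩ := (hsum.sigma.tendsto_atTop_zero.eventually (gt_mem_nhds one_pos)).exists
  rw [tsum_fintype] at hk
  exact (hL k).not_gt hk

variable [NormedSpace 𝕜 E] {n m : ℕ} {p δ : ℝ}

lemma sum_norm_apply_le_of_pos (hn : n ≠ 0) (hP : ∀ (c : 𝕜) x, P (c • x) = c ^ n • P x)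
    (hp : 0 < p) (hq : 0 < q) (hpq : 1 / p + 1 / q = 1) (hδ : 0 < δ)
    (hδP : ∀ (x : Fin m → E) (φ : Fin m → F →L[𝕜] 𝕜), ∑ i, ‖x i‖ ^ ((n : ℝ) * p) ≤ δ →
      (∀ y ∈ closedBall (0 : F) 1, ∑ i, ‖φ i y‖ ^ q ≤ δ) → ∑ i, ‖φ i (P (x i))‖ ≤ 1)
    (x : Fin m → E) (φ : Fin m → F →L[𝕜] 𝕜) (hS : 0 < ∑ i, ‖x i‖ ^ ((n : ℝ) * p))
    (hW : 0 < weakNorm q φ) :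
    ∑ i, ‖φ i (P (x i))‖ ≤ δ⁻¹ * (∑ i, ‖x i‖ ^ ((n : ℝ) * p)) ^ (1 / p) * weakNorm q φ := by
  set S := ∑ i, ‖x i‖ ^ ((n : ℝ) * p)
  set W := weakNorm q φ
  set a := S ^ (1 / p)
  have ha : 0 < a := by positivity
  have haS : a ^ p = S := by rw [← Real.rpow_mul hS.le, one_div_mul_cancel hp.ne', Real.rpow_one]
  -- `t • x` and `s • φ` meet the hypotheses of `hδP` with equality, by homogeneity
  set u := δ ^ (1 / p) / a
  have hu : 0 < u := by positivity
  set t := u ^ ((n : ℝ)⁻¹)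
  have ht : 0 < t := by positivity
  have htn : t ^ n = u := Real.rpow_inv_natCast_pow hu.le hn
  set s := δ ^ (1 / q) / W
  have hs : 0 < s := by positivity
  have hscaled := hδP (fun i => (t : 𝕜) • x i) (fun i => (s : 𝕜) • φ i) ?_ ?_
  · have hst : s * t ^ n = δ / (W * a) := by
      rw [htn, div_mul_div_comm, ← Real.rpow_add hδ, add_comm, hpq, Real.rpow_one]
    have hL : ∑ i, ‖((s : 𝕜) • φ i) (P ((t : 𝕜) • x i))‖ = s * t ^ n * ∑ i, ‖φ i (P (x i))‖ := by
      rw [Finset.mul_sum]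
      refine Finset.sum_congr rfl fun i _ => ?_
      rw [hP, smul_apply, map_smul, smul_smul, norm_smul, norm_mul, norm_pow, RCLike.norm_ofReal,
        RCLike.norm_ofReal, abs_of_pos hs, abs_of_pos ht]
    rw [hL, hst, div_mul_eq_mul_div, div_le_one (by positivity)] at hscaled
    calc ∑ i, ‖φ i (P (x i))‖ = δ⁻¹ * (δ * ∑ i, ‖φ i (P (x i))‖) := by field_simp
      _ ≤ δ⁻¹ * (W * a) := by gcongr
      _ = δ⁻¹ * a * W := by ring
  · have htnp : t ^ ((n : ℝ) * p) = δ / S := by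
      rw [Real.rpow_mul ht.le, Real.rpow_natCast, htn, Real.div_rpow (by positivity) ha.le, haS,
        ← Real.rpow_mul hδ.le, one_div_mul_cancel hp.ne', Real.rpow_one]
    refine le_of_eq ?_
    calc ∑ i, ‖(t : 𝕜) • x i‖ ^ ((n : ℝ) * p) = t ^ ((n : ℝ) * p) * S := by
          simp only [S, Finset.mul_sum, norm_smul, RCLike.norm_ofReal, abs_of_pos ht,
            Real.mul_rpow ht.le (norm_nonneg _)]
      _ = δ := by rw [htnp, div_mul_cancel₀ _ hS.ne']
  · intro y hy
    calc ∑ i, ‖((s : 𝕜) • φ i) y‖ ^ q = s ^ q * ∑ i, ‖φ i y‖ ^ q := by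
          simp_rw [Finset.mul_sum, smul_apply, norm_smul, RCLike.norm_ofReal, abs_of_pos hs,
            Real.mul_rpow hs.le (norm_nonneg _)]
      _ ≤ s ^ q * W ^ q := by gcongr; exact sum_rpow_le_weakNorm_rpow hq φ hy
      _ = δ := by
          rw [← Real.mul_rpow hs.le hW.le, div_mul_cancel₀ _ hW.ne', ← Real.rpow_mul hδ.le,
            one_div_mul_cancel hq.ne', Real.rpow_one]

lemma sum_norm_apply_le (hn : n ≠ 0) (hP : ∀ (c : 𝕜) x, P (c • x) = c ^ n • P x)
    (hp : 0 < p) (hq : 0 < q) (hpq : 1 / p + 1 / q = 1) (hδ : 0 < δ)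
    (hδP : ∀ (x : Fin m → E) (φ : Fin m → F →L[𝕜] 𝕜), ∑ i, ‖x i‖ ^ ((n : ℝ) * p) ≤ δ →
      (∀ y ∈ closedBall (0 : F) 1, ∑ i, ‖φ i y‖ ^ q ≤ δ) → ∑ i, ‖φ i (P (x i))‖ ≤ 1)
    (x : Fin m → E) (φ : Fin m → F →L[𝕜] 𝕜) :
    ∑ i, ‖φ i (P (x i))‖ ≤ δ⁻¹ * (∑ i, ‖x i‖ ^ ((n : ℝ) * p)) ^ (1 / p) * weakNorm q φ := by
  have hnp : (n : ℝ) * p ≠ 0 := mul_ne_zero (Nat.cast_ne_zero.2 hn) hp.ne'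
  have hsum_zero : ∑ i, ‖φ i (P (x i))‖ = 0 →
      ∑ i, ‖φ i (P (x i))‖ ≤ δ⁻¹ * (∑ i, ‖x i‖ ^ ((n : ℝ) * p)) ^ (1 / p) * weakNorm q φ :=
    fun h => h ▸ by have := weakNorm_nonneg (q := q) φ; positivity
  rcases (Finset.sum_nonneg fun i _ => by positivity :
    0 ≤ ∑ i, ‖x i‖ ^ ((n : ℝ) * p)).eq_or_lt with hS | hS
  · refine hsum_zero (Finset.sum_eq_zero fun i _ => ?_)
    have hxi : x i = 0 := by
      have := (Finset.sum_eq_zero_iff_of_nonneg fun j _ => by positivity).1 hS.symm i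
        (Finset.mem_univ i)
      simpa [Real.rpow_eq_zero (norm_nonneg _) hnp] using this
    have hP0 : P 0 = 0 := by simpa [zero_pow hn] using hP 0 0
    simp [hxi, hP0]
  rcases (weakNorm_nonneg (q := q) φ).eq_or_lt with hW | hW
  · refine hsum_zero (Finset.sum_eq_zero fun i _ => ?_)
    have hφi : φ i = 0 := norm_le_zero_iff.1 (hW ▸ norm_le_weakNorm hq φ i)
    simp [hφi]
  exact sum_norm_apply_le_of_pos hn hP hp hq hpq hδ hδP x φ hS hW

end Summing

lemma summable_of_sum_norm_apply_le {𝕜 E F ι : Type*} [RCLike 𝕜] [NormedAddCommGroup E]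
    [NormedAddCommGroup F] [NormedSpace 𝕜 F] {P : E → F} {r p q C : ℝ} (hC : 0 ≤ C)
    (hp : 0 ≤ p) (hq : 0 ≤ q)
    (h : ∀ (m : ℕ) (x : Fin m → E) (φ : Fin m → F →L[𝕜] 𝕜),
      ∑ i, ‖φ i (P (x i))‖ ≤ C * (∑ i, ‖x i‖ ^ r) ^ (1 / p) * weakNorm q φ)
    (x : ι → E) (hx : Summable fun i => ‖x i‖ ^ r) (φ : ι → F →L[𝕜] 𝕜)
    (hφ : IsWeaklySummable q φ) : Summable fun i => ‖φ i (P (x i))‖ := by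
  obtain ⟨C', hC'⟩ := hφ
  have hC'0 : 0 ≤ C' := by simpa using hC' 0 (by simp) ∅
  refine summable_of_sum_le (c := C * (∑' i, ‖x i‖ ^ r) ^ (1 / p) * C' ^ (1 / q))
    (fun _ => norm_nonneg _) fun u => ?_
  let e := u.equivFin.symm
  have hsum : ∀ f : ι → ℝ, ∑ i, f (e i) = ∑ j ∈ u, f j := fun f =>
    (Equiv.sum_comp e fun j => f j).trans (Finset.sum_coe_sort u f)
  rw [← hsum]
  calc ∑ i, ‖φ (e i) (P (x (e i)))‖
      ≤ C * (∑ i, ‖x (e i)‖ ^ r) ^ (1 / p) * weakNorm q (fun i => φ (e i)) := h _ _ _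
    _ ≤ C * (∑' i, ‖x i‖ ^ r) ^ (1 / p) * C' ^ (1 / q) := by
      gcongr
      · exact weakNorm_nonneg _
      · rw [hsum fun j => ‖x j‖ ^ r]
        exact hx.sum_le_tsum u fun _ _ => by positivity
      · refine weakNorm_le _ (by positivity) fun y hy => ?_
        gcongr
        rw [hsum fun j => ‖φ j y‖ ^ q]
        exact hC' y hy u

theorem stmt4_general {𝕜 : Type*} [RCLike 𝕜] {n : ℕ} (hn : 0 < n)
    {E F : Type*} [NormedAddCommGroup E] [NormedSpace 𝕜 E]
    [NormedAddCommGroup F] [NormedSpace 𝕜 F]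
    (p q : ℝ) (hp : 1 < p) (hq : 1 / p + 1 / q = 1)
    (A : ContinuousMultilinearMap 𝕜 (fun _ : Fin n => E) F)
    (P : E → F) (hP : ∀ x, P x = A (fun _ => x)) :
    (∀ x : ℕ → E, Summable (fun i => ‖x i‖ ^ ((n : ℝ) * p)) →
      ∀ φ : ℕ → F →L[𝕜] 𝕜,
        (∃ C : ℝ, ∀ y ∈ Metric.closedBall (0 : F) 1, ∀ s : Finset ℕ,
            ∑ i ∈ s, ‖φ i y‖ ^ q ≤ C) →
        Summable (fun i => ‖φ i (P (x i))‖))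
    ↔ (∃ C > 0, ∀ (m : ℕ) (x : Fin m → E) (φ : Fin m → F →L[𝕜] 𝕜),
        ∑ i, ‖φ i (P (x i))‖ ≤
          C * (∑ i, ‖x i‖ ^ ((n : ℝ) * p)) ^ (1 / p) * weakNorm q φ) := by
  have hp0 : 0 < p := by linarith
  have hq0 : 0 < q := one_div_pos.1 <| by linarith [(div_lt_one hp0).2 hp]
  have hhom : ∀ (c : 𝕜) x, P (c • x) = c ^ n • P x := fun c x => by
    simpa [hP] using A.map_smul_univ (fun _ => c) fun _ => x
  constructor
  · intro h
    obtain ⟨δ, hδ, hδP⟩ :=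
      exists_sum_norm_apply_le_one (mul_ne_zero (Nat.cast_ne_zero.2 hn.ne') hp0.ne') hq0.ne' h
    exact ⟨δ⁻¹, inv_pos.2 hδ, fun m => sum_norm_apply_le hn.ne' hhom hp0 hq0 hq hδ (hδP m)⟩
  · rintro ⟨C, hC, hCP⟩
    exact summable_of_sum_norm_apply_le hC.le hp0.le hq0.le hCP

/-- For the `n`-homogeneous polynomial `P(x) = A(x,…,x)` associated with a symmetric
bounded `n`-linear operator `A : Eⁿ → F`: `P` maps absolutely `np`-summable sequences to
Cohen strongly `p`-summing sequences iff the Cohen summing inequality for polynomials holds. -/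
theorem stmt4 {𝕜 : Type*} [RCLike 𝕜] {n : ℕ} (hn : 0 < n)
    {E F : Type*} [NormedAddCommGroup E] [NormedSpace 𝕜 E] [CompleteSpace E]
    [NormedAddCommGroup F] [NormedSpace 𝕜 F] [CompleteSpace F]
    (p q : ℝ) (hp : 1 < p) (hq : 1 / p + 1 / q = 1)
    (A : ContinuousMultilinearMap 𝕜 (fun _ : Fin n => E) F)
    (hA : ∀ (σ : Equiv.Perm (Fin n)) (x : Fin n → E), A (x ∘ σ) = A x)
    (P : E → F) (hP : ∀ x, P x = A (fun _ => x)) :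
    (∀ x : ℕ → E, Summable (fun i => ‖x i‖ ^ ((n : ℝ) * p)) →
      ∀ φ : ℕ → F →L[𝕜] 𝕜,
        (∃ C : ℝ, ∀ y ∈ Metric.closedBall (0 : F) 1, ∀ s : Finset ℕ,
            ∑ i ∈ s, ‖φ i y‖ ^ q ≤ C) →
        Summable (fun i => ‖φ i (P (x i))‖))
    ↔ (∃ C > 0, ∀ (m : ℕ) (x : Fin m → E) (φ : Fin m → F →L[𝕜] 𝕜),
        ∑ i, ‖φ i (P (x i))‖ ≤
          C * (∑ i, ‖x i‖ ^ ((n : ℝ) * p)) ^ (1 / p) * weakNorm q φ) :=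
  stmt4_general hn p q hp hq A P hP
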